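/- arXiv:1907.04004 — 2 statements merged into one kernel-verified Lean document; each statement's English description precedes it below -/
import Mathlib

section
/- In the simplified infinite-time-horizon setting, suppose δ > 0 and E[(Y^{1̄})²] > 0; let C_T = b_u²/E[(Y^{1̄})²], let c be any real number with c ≥ 1/(1 − p^T·(E[Y^{1̄}])²/E[(Y^{1̄})²]) (the denominator is strictly positive since (E[Y^{1̄}])² ≤ E[(Y^{1̄})²] and p^T < 1), and set ζ(T; p) = 1 + c·(E[Y^{1̄}])²/((1/p)^T·E[(Y^{1̄})²]). Then Var(ψ̂_at) > 0 and the relative efficiency of the incremental estimator to the always-treated IPW estimator satisfies Var(ψ̂_inc)/Var(ψ̂_at) ≤ C_T·ζ(T; p)·((δ²p² + p(1 − p))/(δp + 1 − p)²)^T. -/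
open MeasureTheory ProbabilityTheory

noncomputable section

/-- Codomain of the joint family `(A₁, …, A_T, U)`: index `some t` carries the binary
treatment `A_t` (valued in `Bool`) and index `none` carries the exogenous variable `U`. -/
def Cod (E : Type) (T : ℕ) : Option (Fin T) → Type
  | none => E
  | some _ => Bool

instance CodMeas (E : Type) [MeasurableSpace E] (T : ℕ) : ∀ i, MeasurableSpace (Cod E T i)
  | none => inferInstanceAs (MeasurableSpace E)
  | some _ => inferInstanceAs (MeasurableSpace Bool)

/-- The joint family `(A₁, …, A_T, U)` bundled as a single dependently-typed family of random
variables, used to state that `(A₁, …, A_T, U)` is mutually independent. -/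
def fam {Ω : Type*} {E : Type} (T : ℕ) (A : Fin T → Ω → Bool) (U : Ω → E) :
    (i : Option (Fin T)) → Ω → Cod E T i
  | none => U
  | some t => A t

/-! The weight `∏ 1{A_t}/p` vanishes off the always-treated path, so
`ψ̂_at = ∏ (A_t/p) · Y^{1̄}`, and independence of `(A₁, …, A_T, U)` factorises its moments:
`E ψ̂_at = E Y^{1̄}` and `E ψ̂_at² = p^{-T} E (Y^{1̄})²`. Hence
`Var ψ̂_at = p^{-T} E (Y^{1̄})² (1 - s)` with `s = p^T (E Y^{1̄})² / E (Y^{1̄})² < 1`.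
The incremental estimator is only bounded from above, `Var ψ̂_inc ≤ E ψ̂_inc² ≤ b_u² (E w(A)²)^T`
for its per-period weight `w`, and the ratio is then controlled by
`1 / (1 - s) ≤ 1 + c s = ζ(T; p)`. -/

lemma integral_comp_bool {Ω : Type*} [MeasurableSpace Ω] {P : Measure Ω}
    [IsProbabilityMeasure P] {B : Ω → Bool} (hB : Measurable B) {p : ℝ} (hp : 0 ≤ p)
    (hBp : P {ω | B ω = true} = ENNReal.ofReal p) (g : Bool → ℝ) :
    ∫ ω, g (B ω) ∂P = g true * p + g false * (1 - p) := by
  have htrue : (P.map B).real {true} = p := by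
    rw [map_measureReal_apply hB (measurableSet_singleton _), measureReal_def]
    simp [Set.preimage, hBp, hp]
  have : IsProbabilityMeasure (P.map B) := Measure.isProbabilityMeasure_map hB.aemeasurable
  have hfalse : (P.map B).real {false} = 1 - p := by
    rw [← htrue, ← probReal_compl_eq_one_sub (measurableSet_singleton _)]
    simp
  rw [← integral_map hB.aemeasurable Measurable.of_discrete.aestronglyMeasurable,
    integral_fintype (.of_finite), Fintype.sum_bool, htrue, hfalse, smul_eq_mul, smul_eq_mul,
    mul_comm p, mul_comm (1 - p)]

lemma prod_mul_eq_prod_mul_of_eq_zero {ι R : Type*} [Fintype ι] [CommMonoidWithZero R]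
    (w : Bool → R) (hw : w false = 0) (F : (ι → Bool) → R) (a : ι → Bool) :
    (∏ i, w (a i)) * F a = (∏ i, w (a i)) * F (fun _ => true) := by
  by_cases ha : a = fun _ => true
  · rw [ha]
  · obtain ⟨i, hi⟩ : ∃ i, a i = false := by
      by_contra! h
      exact ha (funext fun i => by simpa using h i)
    rw [Finset.prod_eq_zero (Finset.mem_univ i) (by rw [hi, hw]), zero_mul, zero_mul]

lemma one_div_one_sub_le_one_add_mul {s c : ℝ} (hs0 : 0 ≤ s) (hs1 : s < 1)
    (hc : 1 / (1 - s) ≤ c) : 1 / (1 - s) ≤ 1 + c * s := by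
  have h : 1 / (1 - s) = 1 + 1 / (1 - s) * s := by
    field_simp [(sub_pos.mpr hs1).ne']; ring
  rw [h]
  gcongr

lemma sq_integral_le_integral_sq {Ω : Type*} [MeasurableSpace Ω] {P : Measure Ω}
    [IsProbabilityMeasure P] {X : Ω → ℝ} (hX : MemLp X 2 P) :
    (∫ ω, X ω ∂P) ^ 2 ≤ ∫ ω, X ω ^ 2 ∂P := by
  have h := variance_nonneg X P
  rwa [variance_eq_sub hX, sub_nonneg] at h

lemma sub_sq_pos_and_div_le {x m μ W B R c : ℝ} (hx0 : 0 < x) (hx1 : x < 1)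
    (hm : 0 < m) (hμ : μ ^ 2 ≤ m) (hB : 0 ≤ B) (hR : 0 ≤ R) (hW : W ≤ R * B)
    (hc : 1 / (1 - x * μ ^ 2 / m) ≤ c) :
    0 < 1 / x * m - μ ^ 2 ∧
      W / (1 / x * m - μ ^ 2) ≤ B / m * (1 + c * μ ^ 2 / (1 / x * m)) * (x * R) := by
  set s := x * μ ^ 2 / m with hs
  have hs1 : s < 1 := by
    rw [div_lt_one hm]
    calc x * μ ^ 2 ≤ x * m := by gcongr
      _ < m := mul_lt_of_lt_one_left hm hx1
  have hV : 1 / x * m - μ ^ 2 = 1 / x * m * (1 - s) := by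
    rw [hs]; field_simp
  have hV_pos : 0 < 1 / x * m - μ ^ 2 := by
    rw [hV]
    have := sub_pos.mpr hs1
    positivity
  refine ⟨hV_pos, ?_⟩
  calc W / (1 / x * m - μ ^ 2) ≤ R * B / (1 / x * m * (1 - s)) := by
        rw [← hV]; gcongr
    _ = B / m * (1 / (1 - s)) * (x * R) := by
        field_simp
    _ ≤ B / m * (1 + c * s) * (x * R) := by
        gcongr
        exact one_div_one_sub_le_one_add_mul (by positivity) hs1 hc
    _ = B / m * (1 + c * μ ^ 2 / (1 / x * m)) * (x * R) := by
        rw [hs]; field_simp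

/-- `ψ̂_at` for `w b = 1{b}/p`, `ψ̂_inc` for `w b = (δ b + 1 - b)/(δ p + 1 - p)`. -/
def weightedOutcome {Ω : Type*} {E : Type} {T : ℕ} (w : Bool → ℝ) (A : Fin T → Ω → Bool)
    (U : Ω → E) (f : (Fin T → Bool) → E → ℝ) (ω : Ω) : ℝ :=
  (∏ t, w (A t ω)) * f (fun s => A s ω) (U ω)

section Setting

variable {Ω : Type*} {E : Type} [MeasurableSpace Ω] [MeasurableSpace E]
  {P : Measure Ω} [IsProbabilityMeasure P] {T : ℕ} {p : ℝ}
  {A : Fin T → Ω → Bool} {U : Ω → E} {f : (Fin T → Bool) → E → ℝ} {bu : ℝ}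

lemma integral_prod_comp_mul_comp (hp : 0 ≤ p)
    (hAmeas : ∀ t, Measurable (A t)) (hUmeas : Measurable U)
    (hindep : @iIndepFun Ω (Option (Fin T)) _ (Cod E T) (fun i => CodMeas E T i) (fam T A U) P)
    (hAp : ∀ t, P {ω | A t ω = true} = ENNReal.ofReal p)
    (g : Bool → ℝ) {k : E → ℝ} (hk : Measurable k) :
    ∫ ω, (∏ t, g (A t ω)) * k (U ω) ∂P
      = (g true * p + g false * (1 - p)) ^ T * ∫ ω, k (U ω) ∂P := by
  let G : ∀ i, Cod E T i → ℝ
    | none => k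
    | some _ => g
  have hfam : ∀ i, Measurable (fam T A U i)
    | none => hUmeas
    | some t => hAmeas t
  have hG : ∀ i, AEStronglyMeasurable (G i) (P.map (fam T A U i))
    | none => hk.aestronglyMeasurable
    | some _ => (Measurable.of_discrete (α := Bool)).aestronglyMeasurable
  have key := hindep.integral_fun_prod_comp (fun i => (hfam i).aemeasurable) hG
  simp only [Fintype.prod_option] at key
  simp only [G, fam, integral_comp_bool (hAmeas _) hp (hAp _), Finset.prod_const,
    Finset.card_univ, Fintype.card_fin] at key
  simpa only [mul_comm] using key

lemma measurable_weightedOutcome (hAmeas : ∀ t, Measurable (A t)) (hUmeas : Measurable U)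
    (hf : Measurable (fun q : (Fin T → Bool) × E => f q.1 q.2)) (w : Bool → ℝ) :
    Measurable (weightedOutcome w A U f) :=
  (Finset.measurable_prod _ fun t _ => (Measurable.of_discrete (f := w)).comp (hAmeas t)).mul
    (hf.comp ((measurable_pi_lambda _ hAmeas).prodMk hUmeas))

lemma memLp_weightedOutcome (hAmeas : ∀ t, Measurable (A t)) (hUmeas : Measurable U)
    (hf : Measurable (fun q : (Fin T → Bool) × E => f q.1 q.2)) (hfbd : ∀ a e, |f a e| ≤ bu)
    (w : Bool → ℝ) (q : ENNReal) :
    MemLp (weightedOutcome w A U f) q P := by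
  obtain ⟨M, hM⟩ := Finite.exists_le fun a : Fin T → Bool => |∏ t, w (a t)|
  refine MemLp.of_bound (measurable_weightedOutcome hAmeas hUmeas hf w).aestronglyMeasurable
    (M * bu) (Filter.Eventually.of_forall fun ω => ?_)
  rw [Real.norm_eq_abs, weightedOutcome, abs_mul]
  exact mul_le_mul (hM _) (hfbd _ _) (abs_nonneg _) ((abs_nonneg _).trans (hM fun t => A t ω))

lemma variance_weightedOutcome_le (hp : 0 ≤ p)
    (hAmeas : ∀ t, Measurable (A t)) (hUmeas : Measurable U)
    (hindep : @iIndepFun Ω (Option (Fin T)) _ (Cod E T) (fun i => CodMeas E T i) (fam T A U) P)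
    (hAp : ∀ t, P {ω | A t ω = true} = ENNReal.ofReal p)
    (hf : Measurable (fun q : (Fin T → Bool) × E => f q.1 q.2)) (hfbd : ∀ a e, |f a e| ≤ bu)
    (w : Bool → ℝ) :
    variance (weightedOutcome w A U f) P
      ≤ (w true ^ 2 * p + w false ^ 2 * (1 - p)) ^ T * bu ^ 2 := by
  have hbound : ∀ ω, weightedOutcome w A U f ω ^ 2
      ≤ weightedOutcome (fun b => w b ^ 2) A U (fun _ _ => bu ^ 2) ω := fun ω => by
    rw [weightedOutcome, weightedOutcome, mul_pow, ← Finset.prod_pow]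
    exact mul_le_mul_of_nonneg_left (sq_le_sq' (abs_le.mp (hfbd _ _)).1 (abs_le.mp (hfbd _ _)).2)
      (Finset.prod_nonneg fun t _ => sq_nonneg _)
  have hbu : ∀ a e, |(fun _ _ => bu ^ 2 : (Fin T → Bool) → E → ℝ) a e| ≤ bu ^ 2 :=
    fun _ _ => (abs_of_nonneg (sq_nonneg bu)).le
  calc variance (weightedOutcome w A U f) P
      ≤ ∫ ω, weightedOutcome w A U f ω ^ 2 ∂P :=
        variance_le_expectation_sq
          (measurable_weightedOutcome hAmeas hUmeas hf w).aestronglyMeasurable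
    _ ≤ ∫ ω, weightedOutcome (fun b => w b ^ 2) A U (fun _ _ => bu ^ 2) ω ∂P :=
        integral_mono (memLp_weightedOutcome hAmeas hUmeas hf hfbd w 2).integrable_sq
          ((memLp_weightedOutcome hAmeas hUmeas measurable_const hbu _ 1).integrable le_rfl) hbound
    _ = (w true ^ 2 * p + w false ^ 2 * (1 - p)) ^ T * bu ^ 2 := by
        simp only [weightedOutcome]
        rw [integral_prod_comp_mul_comp hp hAmeas hUmeas hindep hAp (w · ^ 2) measurable_const,
          integral_const, probReal_univ, one_smul]

lemma integral_weightedOutcome_pow_of_eq_zero (hp : 0 ≤ p)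
    (hAmeas : ∀ t, Measurable (A t)) (hUmeas : Measurable U)
    (hindep : @iIndepFun Ω (Option (Fin T)) _ (Cod E T) (fun i => CodMeas E T i) (fam T A U) P)
    (hAp : ∀ t, P {ω | A t ω = true} = ENNReal.ofReal p)
    (hf : Measurable (fun q : (Fin T → Bool) × E => f q.1 q.2))
    {w : Bool → ℝ} (hw : w false = 0) {n : ℕ} (hn : n ≠ 0) :
    ∫ ω, weightedOutcome w A U f ω ^ n ∂P
      = (w true ^ n * p) ^ T * ∫ ω, f (fun _ => true) (U ω) ^ n ∂P := by
  have h1 : Measurable (f fun _ => true) := hf.comp (measurable_const.prodMk measurable_id)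
  have hpt : ∀ ω, weightedOutcome w A U f ω ^ n
      = (∏ t, w (A t ω) ^ n) * f (fun _ => true) (U ω) ^ n := fun ω => by
    rw [weightedOutcome, prod_mul_eq_prod_mul_of_eq_zero w hw (fun a => f a (U ω)), mul_pow,
      Finset.prod_pow]
  simp only [hpt]
  rw [integral_prod_comp_mul_comp hp hAmeas hUmeas hindep hAp (w · ^ n) (h1.pow_const n), hw,
    zero_pow hn, zero_mul, add_zero]

lemma variance_weightedOutcome_alwaysTreated (hp : 0 < p)
    (hAmeas : ∀ t, Measurable (A t)) (hUmeas : Measurable U)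
    (hindep : @iIndepFun Ω (Option (Fin T)) _ (Cod E T) (fun i => CodMeas E T i) (fam T A U) P)
    (hAp : ∀ t, P {ω | A t ω = true} = ENNReal.ofReal p)
    (hf : Measurable (fun q : (Fin T → Bool) × E => f q.1 q.2))
    (hfbd : ∀ a e, |f a e| ≤ bu) :
    variance (weightedOutcome (fun b => (if b then 1 else 0) / p) A U f) P
      = (1 / p) ^ T * ∫ ω, f (fun _ => true) (U ω) ^ 2 ∂P
        - (∫ ω, f (fun _ => true) (U ω) ∂P) ^ 2 := by
  have hmean := integral_weightedOutcome_pow_of_eq_zero hp.le hAmeas hUmeas hindep hAp hf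
    (w := fun b => (if b then 1 else 0) / p) (zero_div p) one_ne_zero
  have hsq := integral_weightedOutcome_pow_of_eq_zero hp.le hAmeas hUmeas hindep hAp hf
    (w := fun b => (if b then 1 else 0) / p) (zero_div p) two_ne_zero
  simp only [pow_one, if_true] at hmean hsq
  rw [variance_eq_sub (memLp_weightedOutcome hAmeas hUmeas hf hfbd _ 2)]
  simp only [Pi.pow_apply]
  have hw2 : (1 / p) ^ 2 * p = 1 / p := by field_simp
  rw [hmean, hsq, one_div_mul_cancel hp.ne', one_pow, one_mul, hw2]

end Setting

theorem relative_efficiency_upper_bound_always_treated_general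
    {Ω : Type*} {E : Type} [MeasurableSpace Ω] [MeasurableSpace E]
    (P : Measure Ω) [IsProbabilityMeasure P]
    (T : ℕ) (hT : 1 ≤ T)
    (p : ℝ) (hp : p ∈ Set.Ioo (0:ℝ) 1)
    (A : Fin T → Ω → Bool) (U : Ω → E)
    (hAmeas : ∀ t, Measurable (A t)) (hUmeas : Measurable U)
    (hindep : @iIndepFun Ω (Option (Fin T)) _ (Cod E T) (fun i => CodMeas E T i) (fam T A U) P)
    (hAp : ∀ t, P {ω | A t ω = true} = ENNReal.ofReal p)
    (f : (Fin T → Bool) → E → ℝ)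
    (hf : Measurable (fun q : (Fin T → Bool) × E => f q.1 q.2))
    (bu : ℝ) (hfbd : ∀ a e, |f a e| ≤ bu)
    (δ : ℝ)
    (hY2 : 0 < ∫ ω, (f (fun _ => true) (U ω)) ^ 2 ∂P)
    (c : ℝ)
    (hc : 1 / (1 - p ^ T * (∫ ω, f (fun _ => true) (U ω) ∂P) ^ 2
        / (∫ ω, (f (fun _ => true) (U ω)) ^ 2 ∂P)) ≤ c) :
    0 < variance (fun ω =>
        (∏ t, (if A t ω then (1:ℝ) else 0) / p) * f (fun s => A s ω) (U ω)) P
    ∧ variance (fun ω =>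
          (∏ t, (if A t ω then δ else 1) / (δ * p + 1 - p)) * f (fun s => A s ω) (U ω)) P
        / variance (fun ω =>
            (∏ t, (if A t ω then (1:ℝ) else 0) / p) * f (fun s => A s ω) (U ω)) P
      ≤ (bu ^ 2 / ∫ ω, (f (fun _ => true) (U ω)) ^ 2 ∂P)
        * (1 + c * (∫ ω, f (fun _ => true) (U ω) ∂P) ^ 2
            / ((1 / p) ^ T * ∫ ω, (f (fun _ => true) (U ω)) ^ 2 ∂P))
        * ((δ ^ 2 * p ^ 2 + p * (1 - p)) / (δ * p + 1 - p) ^ 2) ^ T := by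
  obtain ⟨hp0, hp1⟩ := hp
  set wat : Bool → ℝ := fun b => (if b then 1 else 0) / p
  set winc : Bool → ℝ := fun b => (if b then δ else 1) / (δ * p + 1 - p)
  change 0 < variance (weightedOutcome wat A U f) P
    ∧ variance (weightedOutcome winc A U f) P / variance (weightedOutcome wat A U f) P ≤ _
  have hVinc := variance_weightedOutcome_le hp0.le hAmeas hUmeas hindep hAp hf hfbd winc
  have h1 : Measurable (f fun _ => true) := hf.comp (measurable_const.prodMk measurable_id)
  have hμ := sq_integral_le_integral_sq (P := P) (X := fun ω => f (fun _ => true) (U ω))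
    (MemLp.of_bound (h1.comp hUmeas).aestronglyMeasurable bu (ae_of_all _ fun _ => hfbd _ _))
  have hR : p * (winc true ^ 2 * p + winc false ^ 2 * (1 - p))
      = (δ ^ 2 * p ^ 2 + p * (1 - p)) / (δ * p + 1 - p) ^ 2 := by
    simp only [winc, if_true, Bool.false_eq_true, if_false]
    generalize δ * p + 1 - p = q
    ring
  rw [variance_weightedOutcome_alwaysTreated hp0 hAmeas hUmeas hindep hAp hf hfbd, ← hR, mul_pow,
    one_div_pow]
  exact sub_sq_pos_and_div_le (pow_pos hp0 T) (pow_lt_one₀ hp0.le hp1 (by omega))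
    hY2 hμ (sq_nonneg bu) (by have := sub_pos.mpr hp1; positivity) hVinc hc

/-- Upper bound on the relative efficiency of the incremental-effect estimator to the
always-treated IPW estimator: with `C_T = b_u²/E[(Y^{1̄})²]`,
`c ≥ 1/(1 − p^T(E[Y^{1̄}])²/E[(Y^{1̄})²])` and
`ζ(T;p) = 1 + c·(E[Y^{1̄}])²/((1/p)^T·E[(Y^{1̄})²])`, we have `Var(ψ̂_at) > 0` and
`Var(ψ̂_inc)/Var(ψ̂_at) ≤ C_T·ζ(T;p)·((δ²p² + p(1−p))/(δp+1−p)²)^T`. -/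
theorem relative_efficiency_upper_bound_always_treated
    {Ω : Type*} {E : Type} [MeasurableSpace Ω] [MeasurableSpace E]
    (P : Measure Ω) [IsProbabilityMeasure P]
    (T : ℕ) (hT : 1 ≤ T)
    (p : ℝ) (hp : p ∈ Set.Ioo (0:ℝ) 1)
    (A : Fin T → Ω → Bool) (U : Ω → E)
    (hAmeas : ∀ t, Measurable (A t)) (hUmeas : Measurable U)
    (hindep : @iIndepFun Ω (Option (Fin T)) _ (Cod E T) (fun i => CodMeas E T i) (fam T A U) P)
    (hAp : ∀ t, P {ω | A t ω = true} = ENNReal.ofReal p)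
    (f : (Fin T → Bool) → E → ℝ)
    (hf : Measurable (fun q : (Fin T → Bool) × E => f q.1 q.2))
    (bu : ℝ) (hbu : 0 < bu) (hfbd : ∀ a e, |f a e| ≤ bu)
    (δ : ℝ) (hδ : 0 < δ)
    (hY2 : 0 < ∫ ω, (f (fun _ => true) (U ω)) ^ 2 ∂P)
    (c : ℝ)
    (hc : 1 / (1 - p ^ T * (∫ ω, f (fun _ => true) (U ω) ∂P) ^ 2
        / (∫ ω, (f (fun _ => true) (U ω)) ^ 2 ∂P)) ≤ c) :
    0 < variance (fun ω =>
        (∏ t, (if A t ω then (1:ℝ) else 0) / p) * f (fun s => A s ω) (U ω)) P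
    ∧ variance (fun ω =>
          (∏ t, (if A t ω then δ else 1) / (δ * p + 1 - p)) * f (fun s => A s ω) (U ω)) P
        / variance (fun ω =>
            (∏ t, (if A t ω then (1:ℝ) else 0) / p) * f (fun s => A s ω) (U ω)) P
      ≤ (bu ^ 2 / ∫ ω, (f (fun _ => true) (U ω)) ^ 2 ∂P)
        * (1 + c * (∫ ω, f (fun _ => true) (U ω) ∂P) ^ 2
            / ((1 / p) ^ T * ∫ ω, (f (fun _ => true) (U ω)) ^ 2 ∂P))
        * ((δ ^ 2 * p ^ 2 + p * (1 - p)) / (δ * p + 1 - p) ^ 2) ^ T :=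
  relative_efficiency_upper_bound_always_treated_general P T hT p hp A U hAmeas hUmeas hindep hAp f
    hf bu hfbd δ hY2 c hc
end
end

section
/- In the simplified infinite-time-horizon setting, for every δ > 0 the variance of the incremental-effect IPW estimator admits the lower bound Var(ψ̂_inc) ≥ Σ_{ā ∈ {0,1}^T} (∏_{t=1}^T (1{a_t = 1}·δ²p + 1{a_t = 0}·(1 − p))/(δp + 1 − p)²)·E[(Y^ā)²] − b_u², obtained from the exact second-moment decomposition together with the bound (E[ψ̂_inc])² ≤ b_u². -/
open MeasureTheory ProbabilityTheory

noncomputable section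

/-! By independence, `E[G(A, U)] = ∑ₐ π(a) E[G(a, U)]` for every `G`: write
`G(A, U) = ∑ₐ 1{A = a} G(a, U)` and factor each `E[1{A = a} G(a, U)]` over the independent
coordinates of `(A₁, …, A_T, U)`. Write the estimator as `W Y` with `W = ∏ₜ w(Aₜ)` and
`w = incWeight δ p`. Applied to `(W Y)²` this is the exact second moment, since
`π(a) ∏ₜ w(aₜ)²` is the stated product. Applied to `W` it gives
`E[W] = (p w(1) + (1 - p) w(0))^T = 1`, so `|E[W Y]| ≤ b_u E[W] = b_u` and the variance
`E[(W Y)²] - E[W Y]²` is at least `E[(W Y)²] - b_u²`. -/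

/-- `bernoulliMass p b` is the paper's `π(b)`. -/
def bernoulliMass (p : ℝ) (b : Bool) : ℝ := if b then p else 1 - p

/-- The factors of the incremental-effect IPW weight `∏ₜ (δ Aₜ + 1 - Aₜ) / (δ p + 1 - p)`. -/
def incWeight (δ p : ℝ) (b : Bool) : ℝ := (if b then δ else 1) / (δ * p + 1 - p)

structure IsBernoulliTreatmentModel {Ω : Type*} {E : Type} [MeasurableSpace Ω]
    [MeasurableSpace E] {T : ℕ} (P : Measure Ω) (p : ℝ) (A : Fin T → Ω → Bool) (U : Ω → E) :
    Prop where
  measurable_treatment : ∀ t, Measurable (A t)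
  measurable_exogenous : Measurable U
  indep : iIndepFun (m := fun i => CodMeas E T i) (fam T A U) P
  measure_treatment_true : ∀ t, P {ω | A t ω = true} = ENNReal.ofReal p
  prob_nonneg : 0 ≤ p

/-- Evaluated along `fam T A U`, the product of these factors is `1{A = a} * k U`. -/
def profileFactor {E : Type} {T : ℕ} (a : Fin T → Bool) (k : E → ℝ) :
    (i : Option (Fin T)) → Cod E T i → ℝ
  | none => k
  | some t => fun b : Bool => if b = a t then 1 else 0

lemma abs_integral_mul_le_of_integral_eq_one {Ω : Type*} [MeasurableSpace Ω] {P : Measure Ω}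
    {W Y : Ω → ℝ} {b : ℝ} (hW0 : ∀ ω, 0 ≤ W ω) (hW : Integrable W P) (hW1 : ∫ ω, W ω ∂P = 1)
    (hY : AEStronglyMeasurable Y P) (hYb : ∀ ω, |Y ω| ≤ b) :
    |∫ ω, W ω * Y ω ∂P| ≤ b := by
  have hWY : Integrable (fun ω => W ω * Y ω) P := hW.mul_bdd hY (.of_forall hYb)
  calc |∫ ω, W ω * Y ω ∂P| ≤ ∫ ω, |W ω * Y ω| ∂P := abs_integral_le_integral_abs
    _ ≤ ∫ ω, W ω * b ∂P := by
      refine integral_mono hWY.abs (hW.mul_const b) fun ω => ?_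
      rw [abs_mul, abs_of_nonneg (hW0 ω)]
      exact mul_le_mul_of_nonneg_left (hYb ω) (hW0 ω)
    _ = b := by rw [integral_mul_const, hW1, one_mul]

lemma sum_bernoulliMass_mul_incWeight {δ p : ℝ} (hD : δ * p + 1 - p ≠ 0) :
    ∑ b, bernoulliMass p b * incWeight δ p b = 1 := by
  simp only [Fintype.sum_bool, bernoulliMass, incWeight, if_true, Bool.false_eq_true, if_false]
  rw [mul_div_assoc', mul_div_assoc', ← add_div, div_eq_one_iff_eq hD]
  ring

lemma bernoulliMass_mul_incWeight_sq (δ p : ℝ) (b : Bool) :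
    bernoulliMass p b * incWeight δ p b ^ 2
      = (if b then δ ^ 2 * p else 1 - p) / (δ * p + 1 - p) ^ 2 := by
  cases b <;>
    simp only [bernoulliMass, incWeight, if_true, Bool.false_eq_true, if_false, div_pow] <;> ring

lemma incWeight_nonneg {δ p : ℝ} (hδ : 0 ≤ δ) (hp0 : 0 ≤ p) (hp1 : p ≤ 1) (b : Bool) :
    0 ≤ incWeight δ p b :=
  div_nonneg (by cases b <;> simp [hδ]) (by nlinarith)

lemma integral_sq_sub_sq_le_variance_mul {Ω : Type*} [MeasurableSpace Ω] {P : Measure Ω}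
    [IsProbabilityMeasure P] {W Y : Ω → ℝ} {b C : ℝ} (hW : AEStronglyMeasurable W P)
    (hW0 : ∀ ω, 0 ≤ W ω) (hWC : ∀ ω, W ω ≤ C) (hW1 : ∫ ω, W ω ∂P = 1)
    (hY : AEStronglyMeasurable Y P) (hYb : ∀ ω, |Y ω| ≤ b) :
    ∫ ω, (W ω * Y ω) ^ 2 ∂P - b ^ 2 ≤ variance (fun ω => W ω * Y ω) P := by
  have hWC' : ∀ ω, ‖W ω‖ ≤ C := fun ω => (Real.norm_of_nonneg (hW0 ω)).trans_le (hWC ω)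
  have hWY : MemLp (fun ω => W ω * Y ω) 2 P := by
    refine .of_bound (hW.mul hY) (C * b) (.of_forall fun ω => ?_)
    rw [norm_mul]
    exact mul_le_mul (hWC' ω) (hYb ω) (norm_nonneg _) ((norm_nonneg _).trans (hWC' ω))
  have hmean : |∫ ω, W ω * Y ω ∂P| ≤ b :=
    abs_integral_mul_le_of_integral_eq_one hW0 (.of_bound hW C (.of_forall hWC')) hW1 hY hYb
  rw [variance_eq_sub hWY]
  simp only [Pi.pow_apply]
  nlinarith [sq_le_sq' (abs_le.mp hmean).1 (abs_le.mp hmean).2]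

namespace IsBernoulliTreatmentModel

variable {Ω : Type*} {E : Type} [MeasurableSpace Ω] [MeasurableSpace E] {P : Measure Ω}
  [IsProbabilityMeasure P] {T : ℕ} {p : ℝ} {A : Fin T → Ω → Bool} {U : Ω → E}

lemma measureReal_treatment_eq (h : IsBernoulliTreatmentModel P p A U) (t : Fin T) (b : Bool) :
    P.real {ω | A t ω = b} = bernoulliMass p b := by
  have htrue : P.real {ω | A t ω = true} = p := by
    rw [measureReal_def, h.measure_treatment_true t, ENNReal.toReal_ofReal h.prob_nonneg]
  cases b with
  | true => exact htrue
  | false =>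
    have hcompl : {ω | A t ω = false} = {ω | A t ω = true}ᶜ := by ext ω; simp
    have hmeas : MeasurableSet {ω | A t ω = true} :=
      h.measurable_treatment t (measurableSet_singleton true)
    rw [hcompl, measureReal_compl hmeas, htrue, probReal_univ]
    rfl

lemma integral_profile_indicator_mul (h : IsBernoulliTreatmentModel P p A U)
    (a : Fin T → Bool) {k : E → ℝ} (hk : AEStronglyMeasurable k (P.map U)) :
    ∫ ω, (∏ t, if A t ω = a t then 1 else 0) * k (U ω) ∂P
      = (∏ t, bernoulliMass p (a t)) * ∫ ω, k (U ω) ∂P := by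
  have hfam : ∀ i, AEMeasurable (fam T A U i) P
    | none => h.measurable_exogenous.aemeasurable
    | some t => (h.measurable_treatment t).aemeasurable
  have hfactor : ∀ i, AEStronglyMeasurable (profileFactor a k i) (P.map (fam T A U i))
    | none => hk
    | some _ => (measurable_of_countable (α := Bool) _).aestronglyMeasurable
  have hprod := h.indep.integral_fun_prod_comp hfam hfactor
  have hindicator : ∀ t, ∫ ω, (if A t ω = a t then 1 else 0 : ℝ) ∂P = bernoulliMass p (a t) := by
    intro t
    have hmeas : MeasurableSet {ω | A t ω = a t} :=
      h.measurable_treatment t (measurableSet_singleton (a t))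
    rw [← h.measureReal_treatment_eq t, ← integral_indicator_one hmeas]
    simp only [Set.indicator_apply, Set.mem_ofPred_eq, Pi.one_apply]
  simp only [Fintype.prod_option, profileFactor, fam, hindicator] at hprod
  rw [mul_comm, ← hprod]
  simp only [mul_comm]

lemma integral_comp_eq_sum (h : IsBernoulliTreatmentModel P p A U)
    {G : (Fin T → Bool) → E → ℝ} (hG : ∀ a, Integrable (G a) (P.map U)) :
    ∫ ω, G (fun t => A t ω) (U ω) ∂P
      = ∑ a, (∏ t, bernoulliMass p (a t)) * ∫ ω, G a (U ω) ∂P := by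
  have hsplit : ∀ ω, G (fun t => A t ω) (U ω)
      = ∑ a, (∏ t, if A t ω = a t then 1 else 0) * G a (U ω) := by
    intro ω
    simp [Finset.prod_boole, ← funext_iff]
  have hint : ∀ a, Integrable (fun ω => (∏ t, if A t ω = a t then 1 else 0) * G a (U ω)) P := by
    intro a
    refine ((hG a).comp_measurable h.measurable_exogenous).bdd_mul (c := 1) ?_
      (.of_forall fun ω => ?_)
    · exact (Finset.measurable_fun_prod _ fun t _ =>
        (measurable_of_countable (fun b : Bool => if b = a t then (1 : ℝ) else 0)).comp
          (h.measurable_treatment t)).aestronglyMeasurable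
    · rw [Finset.prod_boole]
      split_ifs <;> simp
  rw [integral_congr_ae (.of_forall hsplit), integral_finsetSum _ fun a _ => hint a]
  exact Finset.sum_congr rfl fun a _ =>
    h.integral_profile_indicator_mul a (hG a).aestronglyMeasurable

lemma integral_prod_incWeight_eq_one (h : IsBernoulliTreatmentModel P p A U) {δ : ℝ}
    (hD : δ * p + 1 - p ≠ 0) :
    ∫ ω, ∏ t, incWeight δ p (A t ω) ∂P = 1 := by
  rw [h.integral_comp_eq_sum (G := fun a _ => ∏ t, incWeight δ p (a t))
    fun _ => integrable_const _]
  simp only [integral_const, probReal_univ, one_smul, ← Finset.prod_mul_distrib]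
  rw [← Fintype.prod_sum fun (_ : Fin T) b => bernoulliMass p b * incWeight δ p b]
  simp only [sum_bernoulliMass_mul_incWeight hD, Finset.prod_const_one]

lemma integral_incWeight_mul_sq (h : IsBernoulliTreatmentModel P p A U) (δ : ℝ)
    {f : (Fin T → Bool) → E → ℝ} (hf : ∀ a, Integrable (fun e => f a e ^ 2) (P.map U)) :
    ∫ ω, ((∏ t, incWeight δ p (A t ω)) * f (fun t => A t ω) (U ω)) ^ 2 ∂P
      = ∑ a, (∏ t, (if a t then δ ^ 2 * p else 1 - p) / (δ * p + 1 - p) ^ 2) *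
          ∫ ω, f a (U ω) ^ 2 ∂P := by
  simp only [mul_pow]
  rw [h.integral_comp_eq_sum (G := fun a e => (∏ t, incWeight δ p (a t)) ^ 2 * f a e ^ 2)
    fun a => (hf a).const_mul _]
  refine Finset.sum_congr rfl fun a _ => ?_
  rw [integral_const_mul, ← mul_assoc, ← Finset.prod_pow, ← Finset.prod_mul_distrib]
  simp only [bernoulliMass_mul_incWeight_sq]

end IsBernoulliTreatmentModel

theorem inc_variance_lower_bound_general
    {Ω : Type*} {E : Type} [MeasurableSpace Ω] [MeasurableSpace E]
    (P : Measure Ω) [IsProbabilityMeasure P]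
    (T : ℕ)
    (p : ℝ) (hp : p ∈ Set.Ioo (0:ℝ) 1)
    (A : Fin T → Ω → Bool) (U : Ω → E)
    (hAmeas : ∀ t, Measurable (A t)) (hUmeas : Measurable U)
    (hindep : iIndepFun (m := fun i => CodMeas E T i) (fam T A U) P)
    (hAp : ∀ t, P {ω | A t ω = true} = ENNReal.ofReal p)
    (f : (Fin T → Bool) → E → ℝ)
    (hf : Measurable (fun q : (Fin T → Bool) × E => f q.1 q.2))
    (bu : ℝ) (hfbd : ∀ a e, |f a e| ≤ bu)
    (δ : ℝ) (hδ : 0 < δ) :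
    variance (fun ω =>
        (∏ t, (if A t ω then δ else 1) / (δ * p + 1 - p)) * f (fun s => A s ω) (U ω)) P
      ≥ (∑ a : Fin T → Bool,
          (∏ t, (if a t then δ ^ 2 * p else 1 - p) / (δ * p + 1 - p) ^ 2) *
            ∫ ω, (f a (U ω)) ^ 2 ∂P) - bu ^ 2 := by
  obtain ⟨hp0, hp1⟩ := hp
  have hM : IsBernoulliTreatmentModel P p A U := ⟨hAmeas, hUmeas, hindep, hAp, hp0.le⟩
  have hAvec : Measurable fun ω t => A t ω := measurable_pi_lambda _ hAmeas
  have hfa : ∀ a, Measurable (f a) := fun a => hf.comp (measurable_const.prodMk measurable_id)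
  have hfsq : ∀ a, Integrable (fun e => f a e ^ 2) (P.map U) := fun a =>
    (MemLp.of_bound (hfa a).aestronglyMeasurable bu (.of_forall (hfbd a))).integrable_sq
  obtain ⟨C, hC⟩ := Finite.exists_le fun a : Fin T → Bool => ∏ t, incWeight δ p (a t)
  calc variance (fun ω => (∏ t, incWeight δ p (A t ω)) * f (fun s => A s ω) (U ω)) P
      ≥ ∫ ω, ((∏ t, incWeight δ p (A t ω)) * f (fun s => A s ω) (U ω)) ^ 2 ∂P - bu ^ 2 :=
        integral_sq_sub_sq_le_variance_mul
          ((measurable_of_countable fun a : Fin T → Bool => ∏ t, incWeight δ p (a t)).comp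
            hAvec).aestronglyMeasurable
          (fun ω => Finset.prod_nonneg fun t _ => incWeight_nonneg hδ.le hp0.le hp1.le _)
          (fun ω => hC _) (hM.integral_prod_incWeight_eq_one (by nlinarith))
          (hf.comp (hAvec.prodMk hUmeas)).aestronglyMeasurable (fun ω => hfbd _ _)
    _ = _ := by rw [hM.integral_incWeight_mul_sq δ hfsq]

/-- Lower bound on the variance of the incremental-effect IPW estimator, obtained from the
exact second-moment decomposition and the bound `(E[ψ̂_inc])² ≤ b_u²`:
`Var(ψ̂_inc) ≥ Σ_ā (∏_t (1{a_t=1}δ²p + 1{a_t=0}(1−p))/(δp+1−p)²)·E[(Y^ā)²] − b_u²`. -/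
theorem inc_variance_lower_bound
    {Ω : Type*} {E : Type} [MeasurableSpace Ω] [MeasurableSpace E]
    (P : Measure Ω) [IsProbabilityMeasure P]
    (T : ℕ) (hT : 1 ≤ T)
    (p : ℝ) (hp : p ∈ Set.Ioo (0:ℝ) 1)
    (A : Fin T → Ω → Bool) (U : Ω → E)
    (hAmeas : ∀ t, Measurable (A t)) (hUmeas : Measurable U)
    (hindep : iIndepFun (m := fun i => CodMeas E T i) (fam T A U) P)
    (hAp : ∀ t, P {ω | A t ω = true} = ENNReal.ofReal p)
    (f : (Fin T → Bool) → E → ℝ)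
    (hf : Measurable (fun q : (Fin T → Bool) × E => f q.1 q.2))
    (bu : ℝ) (hbu : 0 < bu) (hfbd : ∀ a e, |f a e| ≤ bu)
    (δ : ℝ) (hδ : 0 < δ) :
    variance (fun ω =>
        (∏ t, (if A t ω then δ else 1) / (δ * p + 1 - p)) * f (fun s => A s ω) (U ω)) P
      ≥ (∑ a : Fin T → Bool,
          (∏ t, (if a t then δ ^ 2 * p else 1 - p) / (δ * p + 1 - p) ^ 2) *
            ∫ ω, (f a (U ω)) ^ 2 ∂P) - bu ^ 2 :=
  inc_variance_lower_bound_general P T p hp A U hAmeas hUmeas hindep hAp f hf bu hfbd δ hδ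
end
end
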